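/- arXiv:2403.07295 — 2 statements merged into one kernel-verified Lean document; each statement's English description precedes it below -/
import Mathlib

section
/- Let d ≥ 1 be an integer and let v = (x, y, Z) ∈ E. Then ⟨v, q⟩ ≥ 0 for all q ∈ K_logdet if and only if either (x < 0, Z is positive definite, and y ≥ x·(log(det(−Z/x)) + d)) or (x = 0, y ≥ 0, and Z is positive semidefinite). In other words, the dual cone of K_logdet with respect to ⟨·,·⟩ equals {(x,y,Z) ∈ E : x < 0, Z positive definite, y ≥ x·(log(det(−Z/x)) + d)} ∪ ({0} × [0,∞) × {Z : Z positive semidefinite}). -/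
open Matrix Filter

noncomputable section

/-- The space `E = ℝ × ℝ × S^d` (matrix parts are required to be symmetric where relevant). -/
abbrev E (d : ℕ) : Type := ℝ × ℝ × Matrix (Fin d) (Fin d) ℝ

/-- The inner product `⟨(x,y,Z),(x',y',Z')⟩ = x x' + y y' + tr (Z Z')` on `E`. -/
def ip {d : ℕ} (p q : E d) : ℝ := p.1 * q.1 + p.2.1 * q.2.1 + (p.2.2 * q.2.2).trace

/-- The induced norm `‖(x,y,Z)‖ = sqrt (x² + y² + tr (Z²))` on `E`. -/
def nrm {d : ℕ} (p : E d) : ℝ := Real.sqrt (p.1 ^ 2 + p.2.1 ^ 2 + (p.2.2 * p.2.2).trace)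

/-- Distance from a point to a set: `dist(p, S) = inf {‖p - s‖ : s ∈ S}`. -/
def sdist {d : ℕ} (p : E d) (S : Set (E d)) : ℝ := sInf {r : ℝ | ∃ s ∈ S, r = nrm (p - s)}

/-- The log-determinant cone `K_logdet`. -/
def Klogdet (d : ℕ) : Set (E d) :=
  {p | (0 < p.2.1 ∧ p.2.2.PosDef ∧ p.1 ≤ p.2.1 * Real.log ((p.2.1⁻¹ • p.2.2).det))
    ∨ (p.1 ≤ 0 ∧ p.2.1 = 0 ∧ p.2.2.PosSemidef)}

/-!
For positive definite `A, B` one has `log det A + log det B + n ≤ tr (A B)`: write `A = Cᴴ C`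
and apply `log λ ≤ λ - 1` to the eigenvalues of `C B Cᴴ`. After rescaling `Z` by `-1/x` and `W`
by `1/b`, this is exactly `0 ≤ ⟨(x, y, Z), (a, b, W)⟩` for `x < 0`.

Conversely, pairing a dual vector with `(-1, 0, 0)`, `(0, 0, v vᵀ)` and `(log det W, 1, W)`
gives `x ≤ 0`, `Z ⪰ 0` and `0 ≤ x log det W + y + tr (Z W)` for all `W ≻ 0`. If `x < 0`, the
choice `W = 1 + t v vᵀ` with `Z v = 0`, `t → ∞` excludes a singular `Z`, and `W = (-Z/x)⁻¹`
gives the bound on `y`; if `x = 0`, `W = ε • 1` with `ε → 0` gives `y ≥ 0`.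
-/

namespace Matrix

variable {n : Type*} [Fintype n] [DecidableEq n]

open scoped MatrixOrder in
theorem PosSemidef.trace_mul_nonneg {A B : Matrix n n ℝ} (hA : A.PosSemidef)
    (hB : B.PosSemidef) : 0 ≤ (A * B).trace := by
  obtain ⟨C, rfl⟩ := CStarAlgebra.nonneg_iff_eq_star_mul_self.mp hA.nonneg
  rw [star_eq_conjTranspose, mul_assoc, trace_mul_comm]
  exact (hB.mul_mul_conjTranspose_same C).trace_nonneg

theorem PosDef.log_det_add_card_le_trace {A : Matrix n n ℝ} (hA : A.PosDef) :
    Real.log A.det + Fintype.card n ≤ A.trace := by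
  have hev := hA.eigenvalues_pos
  rw [hA.1.det_eq_prod_eigenvalues, hA.1.trace_eq_sum_eigenvalues]
  simp only [RCLike.ofReal_real_eq_id, id_eq]
  rw [Real.log_prod fun i _ => (hev i).ne']
  have := Finset.sum_le_sum fun i (_ : i ∈ Finset.univ) => Real.log_le_sub_one_of_pos (hev i)
  simp only [Finset.sum_sub_distrib, Finset.sum_const, Finset.card_univ, nsmul_eq_mul,
    mul_one] at this
  linarith

open scoped MatrixOrder in
theorem PosDef.log_det_add_log_det_add_card_le_trace_mul {A B : Matrix n n ℝ} (hA : A.PosDef)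
    (hB : B.PosDef) : Real.log A.det + Real.log B.det + Fintype.card n ≤ (A * B).trace := by
  obtain ⟨C, hC, rfl⟩ :=
    CStarAlgebra.isStrictlyPositive_iff_eq_star_mul_self.mp hA.isStrictlyPositive
  rw [star_eq_conjTranspose] at hA ⊢
  have hCBC : (C * B * Cᴴ).PosDef :=
    hB.mul_mul_conjTranspose_same (vecMul_injective_iff_isUnit.mpr hC)
  have hdet : (C * B * Cᴴ).det = (Cᴴ * C).det * B.det := by
    simp only [det_mul]; ring
  rw [← Real.log_mul hA.det_pos.ne' hB.det_pos.ne', ← hdet, ← trace_mul_cycle]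
  exact hCBC.log_det_add_card_le_trace

theorem det_one_add_vecMulVec {R : Type*} [CommRing R] (u v : n → R) :
    (1 + vecMulVec u v).det = 1 + v ⬝ᵥ u := by
  rw [vecMulVec_eq Unit, det_one_add_replicateCol_mul_replicateRow]

end Matrix

open Topology

section

variable {n : Type*} [Fintype n] [DecidableEq n] {x y : ℝ} {Z : Matrix n n ℝ}

theorem Matrix.PosDef.mul_add_mul_add_trace_mul_nonneg {a b : ℝ} {W : Matrix n n ℝ}
    (hZ : Z.PosDef) (hx : x < 0)
    (hy : x * (Real.log ((-x⁻¹) • Z).det + Fintype.card n) ≤ y) (hW : W.PosDef) (hb : 0 < b)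
    (ha : a ≤ b * Real.log (b⁻¹ • W).det) :
    0 ≤ x * a + y * b + (Z * W).trace := by
  set Z' := (-x⁻¹) • Z
  set W' := b⁻¹ • W
  have key := (hZ.smul (by simpa using hx : 0 < -x⁻¹)).log_det_add_log_det_add_card_le_trace_mul
    (hW.smul (inv_pos.mpr hb))
  have htrace : (Z * W).trace = -x * b * (Z' * W').trace := by
    rw [smul_mul_smul_comm, trace_smul, smul_eq_mul]
    field_simp [hx.ne]
  have hxa := mul_le_mul_of_nonpos_left ha hx.le
  have hyb := mul_le_mul_of_nonneg_right hy hb.le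
  have hZW := mul_le_mul_of_nonneg_left key (by nlinarith : 0 ≤ -x * b)
  rw [htrace]
  linarith

theorem Matrix.PosSemidef.posDef_of_forall_posDef_nonneg (hZ : Z.PosSemidef) (hx : x < 0)
    (h : ∀ W : Matrix n n ℝ, W.PosDef → 0 ≤ x * Real.log W.det + y + (Z * W).trace) :
    Z.PosDef := by
  rw [hZ.posDef_iff_det_ne_zero]
  intro hdet
  obtain ⟨v, hv, hZv⟩ := exists_mulVec_eq_zero_iff.mpr hdet
  have hvv : 0 < v ⬝ᵥ v := by simpa using dotProduct_star_self_pos_iff.mpr hv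
  have hray : ∀ t : ℝ, 0 ≤ t → 0 ≤ x * Real.log (1 + t * (v ⬝ᵥ v)) + y + Z.trace := by
    intro t ht
    have hWpd : (1 + t • vecMulVec v v).PosDef := by
      simpa using PosDef.one.add_posSemidef ((posSemidef_vecMulVec_self_star v).smul ht)
    have hdet : (1 + t • vecMulVec v v).det = 1 + t * (v ⬝ᵥ v) := by
      rw [← smul_vecMulVec, det_one_add_vecMulVec, dotProduct_smul, smul_eq_mul]
    have htrace : (Z * (1 + t • vecMulVec v v)).trace = Z.trace := by
      rw [Matrix.mul_add, Matrix.mul_smul, mul_vecMulVec, hZv, zero_vecMulVec, smul_zero,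
        Matrix.mul_one, add_zero]
    simpa [hdet, htrace] using h _ hWpd
  have hlim : Tendsto (fun t => x * Real.log (1 + t * (v ⬝ᵥ v))) atTop atBot :=
    (Real.tendsto_log_atTop.comp (tendsto_atTop_add_const_left _ 1
      (tendsto_id.atTop_mul_const hvv))).const_mul_atTop_of_neg hx
  obtain ⟨t, ht, hlt⟩ :=
    ((eventually_ge_atTop 0).and (hlim.eventually_lt_atBot (-(y + Z.trace)))).exists
  linarith [hray t ht]

theorem Matrix.PosDef.le_of_forall_posDef_nonneg (hZ : Z.PosDef) (hx : x < 0)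
    (h : ∀ W : Matrix n n ℝ, W.PosDef → 0 ≤ x * Real.log W.det + y + (Z * W).trace) :
    x * (Real.log ((-x⁻¹) • Z).det + Fintype.card n) ≤ y := by
  set Z' := (-x⁻¹) • Z
  have hZ' : Z'.PosDef := hZ.smul (by simpa using hx)
  have hZZ' : Z = (-x) • Z' := by
    rw [smul_smul, neg_mul_neg, mul_inv_cancel₀ hx.ne, one_smul]
  have htrace : (Z * Z'⁻¹).trace = -x * Fintype.card n := by
    rw [hZZ', smul_mul_assoc, mul_nonsing_inv _ hZ'.det_pos.ne'.isUnit, trace_smul, trace_one,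
      smul_eq_mul]
  have := h Z'⁻¹ hZ'.inv
  rw [det_nonsing_inv, Ring.inverse_eq_inv', Real.log_inv, htrace] at this
  linarith

theorem nonneg_of_forall_posDef_nonneg
    (h : ∀ W : Matrix n n ℝ, W.PosDef → 0 ≤ y + (Z * W).trace) : 0 ≤ y := by
  have hlim : Tendsto (fun ε : ℝ => y + ε * Z.trace) (𝓝[>] 0) (𝓝 y) :=
    ((by fun_prop : Continuous fun ε : ℝ => y + ε * Z.trace).tendsto' 0 y (by simp)).mono_left
      nhdsWithin_le_nhds
  refine ge_of_tendsto hlim (eventually_nhdsWithin_of_forall fun ε (hε : 0 < ε) => ?_)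
  simpa using h _ (PosDef.one.smul hε)

end

theorem mem_Klogdet_of_posDef {d : ℕ} {W : Matrix (Fin d) (Fin d) ℝ} (hW : W.PosDef) :
    ((Real.log W.det, 1, W) : E d) ∈ Klogdet d :=
  Or.inl ⟨one_pos, hW, by simp⟩

namespace Klogdet

variable {d : ℕ} {x y : ℝ} {Z : Matrix (Fin d) (Fin d) ℝ}

theorem nonpos_of_forall_ip_nonneg (h : ∀ q ∈ Klogdet d, 0 ≤ ip ((x, y, Z) : E d) q) :
    x ≤ 0 := by
  simpa [ip] using h (-1, 0, 0) (Or.inr ⟨by norm_num, rfl, .zero⟩)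

theorem posSemidef_of_forall_ip_nonneg (hZ : Z.IsSymm)
    (h : ∀ q ∈ Klogdet d, 0 ≤ ip ((x, y, Z) : E d) q) : Z.PosSemidef := by
  refine .of_dotProduct_mulVec_nonneg hZ fun v => ?_
  have hvv : (vecMulVec v v).PosSemidef := by simpa using posSemidef_vecMulVec_self_star v
  simpa [ip, mul_vecMulVec, trace_vecMulVec, dotProduct_comm] using
    h (0, 0, vecMulVec v v) (Or.inr ⟨le_rfl, rfl, hvv⟩)

theorem forall_posDef_nonneg_of_forall_ip_nonneg
    (h : ∀ q ∈ Klogdet d, 0 ≤ ip ((x, y, Z) : E d) q) (W : Matrix (Fin d) (Fin d) ℝ)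
    (hW : W.PosDef) : 0 ≤ x * Real.log W.det + y + (Z * W).trace := by
  simpa [ip] using h _ (mem_Klogdet_of_posDef hW)

theorem ip_nonneg_of_neg (hx : x < 0) (hZ : Z.PosDef)
    (hy : x * (Real.log ((-x⁻¹) • Z).det + d) ≤ y) {q : E d} (hq : q ∈ Klogdet d) :
    0 ≤ ip ((x, y, Z) : E d) q := by
  obtain ⟨a, b, W⟩ := q
  rcases hq with ⟨hb, hW, ha⟩ | ⟨ha, rfl, hW⟩
  · exact hZ.mul_add_mul_add_trace_mul_nonneg hx (by simpa using hy) hW hb ha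
  · simpa [ip] using add_nonneg (mul_nonneg_of_nonpos_of_nonpos hx.le ha)
      (hZ.posSemidef.trace_mul_nonneg hW)

theorem ip_nonneg_of_zero (hy : 0 ≤ y) (hZ : Z.PosSemidef) {q : E d} (hq : q ∈ Klogdet d) :
    0 ≤ ip ((0, y, Z) : E d) q := by
  obtain ⟨a, b, W⟩ := q
  rcases hq with ⟨hb, hW, -⟩ | ⟨-, rfl, hW⟩
  · simpa [ip] using add_nonneg (mul_nonneg hy hb.le) (hZ.trace_mul_nonneg hW.posSemidef)
  · simpa [ip] using hZ.trace_mul_nonneg hW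

end Klogdet

theorem stmt_8_general (d : ℕ) (x y : ℝ) (Z : Matrix (Fin d) (Fin d) ℝ)
    (hZ : Z.IsSymm) :
    (∀ q ∈ Klogdet d, 0 ≤ ip ((x, y, Z) : E d) q)
      ↔ ((x < 0 ∧ Z.PosDef ∧ x * (Real.log (((-(x⁻¹)) • Z).det) + d) ≤ y)
        ∨ (x = 0 ∧ 0 ≤ y ∧ Z.PosSemidef)) := by
  constructor
  · intro h
    have hpsd := Klogdet.posSemidef_of_forall_ip_nonneg hZ h
    have hslice := Klogdet.forall_posDef_nonneg_of_forall_ip_nonneg h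
    rcases (Klogdet.nonpos_of_forall_ip_nonneg h).lt_or_eq with hx | rfl
    · have hpd := hpsd.posDef_of_forall_posDef_nonneg hx hslice
      exact Or.inl ⟨hx, hpd, by simpa using hpd.le_of_forall_posDef_nonneg hx hslice⟩
    · exact Or.inr ⟨rfl, nonneg_of_forall_posDef_nonneg (by simpa using hslice), hpsd⟩
  · rintro (⟨hx, hpd, hy⟩ | ⟨rfl, hy, hpsd⟩) q hq
    · exact Klogdet.ip_nonneg_of_neg hx hpd hy hq
    · exact Klogdet.ip_nonneg_of_zero hy hpsd hq

/-- The dual cone of `K_logdet`: `v = (x,y,Z)` (with `Z` symmetric) satisfies `⟨v,q⟩ ≥ 0` for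
all `q ∈ K_logdet` iff `x < 0`, `Z ≻ 0`, `y ≥ x (log det (-Z/x) + d)`, or `x = 0`, `y ≥ 0`,
`Z ⪰ 0`. -/
theorem stmt_8 (d : ℕ) (hd : 1 ≤ d) (x y : ℝ) (Z : Matrix (Fin d) (Fin d) ℝ)
    (hZ : Z.IsSymm) :
    (∀ q ∈ Klogdet d, 0 ≤ ip ((x, y, Z) : E d) q)
      ↔ ((x < 0 ∧ Z.PosDef ∧ x * (Real.log (((-(x⁻¹)) • Z).det) + d) ≤ y)
        ∨ (x = 0 ∧ 0 ≤ y ∧ Z.PosSemidef)) :=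
  stmt_8_general d x y Z hZ
end
end

section
/- Let d ≥ 2 be an integer and 0 < r < d. Let R be a d×d real orthogonal matrix, Σ_r an r×r diagonal positive definite matrix, n_y > 0, and set n_Z := R·[[0_{(d−r)×(d−r)}, 0],[0, Σ_r]]·Rᵀ and n := (0, n_y, n_Z) ∈ E. Let Q be an r×(d−r) real matrix with 0 < λ_max(QᵀQ) ≤ 1, and for each integer k ≥ 1 define w^k := (−1, 0, R·[[I_{d−r}, Qᵀ/k],[Q/k, 0_{r×r}]]·Rᵀ) ∈ E, and set F_s := {(x, 0, Z) ∈ E : x ≤ 0, Z positive semidefinite, tr(Z·n_Z) = 0}. Then ⟨w^k, n⟩ = 0, dist(w^k, F_s) = √2·‖Q‖_F/k, dist(w^k, K_logdet) ≤ √r/k², and consequently dist(w^k, F_s) ≥ (√2·‖Q‖_F/r^{1/4}) · dist(w^k, K_logdet)^{1/2} for every k ≥ 1. (Hence the exponent 1/2 in the Hölderian error bound for F_s with n_y > 0 is tight.) -/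
open Matrix Filter

noncomputable section

/-!
Conjugation by `R` composed with the block reindexing preserves traces of products and positive
semidefiniteness, so everything reduces to the block matrix `W = [[I, tQᵀ], [tQ, 0]]`, `t = 1/k`.
If `B ⪰ 0` and `tr(B [[0,0],[0,Σ]]) = 0` with `Σ ≻ 0`, then `B₂₂ = 0`, hence `B₁₂ = B₂₁ = 0`: the
off-diagonal blocks of `W`, of squared norm `2t²‖Q‖_F²`, survive in `W - B` for every point of
`F_s`, and `B = [[I,0],[0,0]]` attains this. On the other hand `[[I, tQᵀ], [tQ, t²QQᵀ]]` is a Gram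
matrix, so `(-1, 0, R [[I, tQᵀ], [tQ, t²QQᵀ]] Rᵀ)` lies in the `y = 0` part of `K_logdet`, at
distance `t²‖QᵀQ‖_F ≤ t²√(rank QᵀQ) ≤ t²√r` since the eigenvalues of `QᵀQ` lie in `[0, 1]`.
-/

open scoped ComplexOrder

namespace Matrix

variable {m n : Type*} [Fintype n]

/- Writing `A = B⋆B`, the trace becomes that of `B S Bᴴ ⪰ 0`, so `B S Bᴴ = 0`; its diagonal entries
are the `S`-quadratic forms of the rows of `B`. -/
theorem PosSemidef.eq_zero_of_trace_mul_posDef_eq_zero {𝕜 : Type*} [RCLike 𝕜]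
    {A S : Matrix n n 𝕜} (hA : A.PosSemidef) (hS : S.PosDef) (h : (A * S).trace = 0) :
    A = 0 := by
  classical
  open MatrixOrder in
  obtain ⟨B, rfl⟩ := CStarAlgebra.nonneg_iff_eq_star_mul_self.mp hA.nonneg
  have hBSB : B * S * Bᴴ = 0 := by
    refine (hS.posSemidef.mul_mul_conjTranspose_same B).trace_eq_zero_iff.mp ?_
    rwa [trace_mul_cycle, ← star_eq_conjTranspose]
  have hB : B = 0 := by
    ext i j
    have hrow : star (B i) = 0 := by
      by_contra hne
      have hpos := hS.dotProduct_mulVec_pos hne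
      rw [star_star] at hpos
      have hii := congrFun (congrFun hBSB i) i
      simp only [mul_apply, conjTranspose_apply, zero_apply] at hii
      simp only [dotProduct, mulVec, Pi.star_apply, Finset.mul_sum] at hpos
      simp only [Finset.sum_mul, mul_assoc] at hii
      rw [Finset.sum_comm] at hii
      exact hpos.ne' hii
    simpa using congrFun hrow j
  simp [hB]

theorem PosSemidef.apply_eq_zero_of_diag_eq_zero {𝕜 : Type*} [RCLike 𝕜]
    {A : Matrix n n 𝕜} (hA : A.PosSemidef) {j : n} (hj : A j j = 0) (i : n) : A i j = 0 := by
  classical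
  have := (hA.dotProduct_mulVec_zero_iff (Pi.single j 1)).mp (by simp [hj])
  simpa using congrFun this i

section Blocks

variable [Fintype m]

theorem trace_fromBlocks {R : Type*} [AddCommMonoid R] (A : Matrix m m R) (B : Matrix m n R)
    (C : Matrix n m R) (D : Matrix n n R) : (fromBlocks A B C D).trace = A.trace + D.trace := by
  simp [trace, Fintype.sum_sum_type]

theorem trace_mul_self_nonneg_of_isSymm {A : Matrix n n ℝ} (hA : A.IsSymm) :
    0 ≤ (A * A).trace := by
  simpa [hA.eq] using (posSemidef_conjTranspose_mul_self A).trace_nonneg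

theorem trace_transpose_mul_self_nonneg (Q : Matrix m n ℝ) : 0 ≤ (Qᵀ * Q).trace :=
  (posSemidef_conjTranspose_mul_self Q).trace_nonneg

theorem PosSemidef.eq_fromBlocks_of_trace_mul_eq_zero {B : Matrix (m ⊕ n) (m ⊕ n) ℝ}
    (hB : B.PosSemidef) {S : Matrix n n ℝ} (hS : S.PosDef)
    (h : (B * fromBlocks 0 0 0 S).trace = 0) : B = fromBlocks B.toBlocks₁₁ 0 0 0 := by
  classical
  have hB₂₂ : B.toBlocks₂₂ = 0 := by
    have hpsd : B.toBlocks₂₂.PosSemidef := hB.submatrix Sum.inr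
    refine hpsd.eq_zero_of_trace_mul_posDef_eq_zero hS ?_
    rw [← fromBlocks_toBlocks B, fromBlocks_multiply, trace_fromBlocks] at h
    simpa using h
  have hcol : ∀ i j, B i (Sum.inr j) = 0 := fun i j =>
    hB.apply_eq_zero_of_diag_eq_zero (congrFun (congrFun hB₂₂ j) j) i
  conv_lhs => rw [← fromBlocks_toBlocks B, hB₂₂]
  congr 1
  · ext i j; exact hcol _ _
  · ext i j; simpa [toBlocks₂₁, hcol] using hB.isHermitian.apply (Sum.inl j) (Sum.inr i)

theorem trace_mul_self_fromBlocks_sub (X Y : Matrix m m ℝ) (Q : Matrix n m ℝ) (t : ℝ) :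
    ((fromBlocks X (t • Qᵀ) (t • Q) 0 - fromBlocks Y 0 0 0) *
        (fromBlocks X (t • Qᵀ) (t • Q) 0 - fromBlocks Y 0 0 0)).trace
      = ((X - Y) * (X - Y)).trace + 2 * t ^ 2 * (Qᵀ * Q).trace := by
  simp only [sub_eq_add_neg, fromBlocks_neg, fromBlocks_add, neg_zero, add_zero]
  rw [fromBlocks_multiply, trace_fromBlocks]
  simp only [Matrix.smul_mul, Matrix.mul_smul, smul_smul, trace_add, trace_smul, mul_zero,
    add_zero, trace_mul_comm Q Qᵀ, smul_eq_mul]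
  ring

theorem posSemidef_fromBlocks_one_transpose [DecidableEq m] (P : Matrix n m ℝ) :
    (fromBlocks 1 Pᵀ P (P * Pᵀ)).PosSemidef := by
  have h : fromBlocks 1 Pᵀ P (P * Pᵀ) = (fromCols (1 : Matrix m m ℝ) Pᵀ)ᴴ * fromCols 1 Pᵀ := by
    rw [conjTranspose_fromCols_eq_fromRows_conjTranspose, fromRows_mul_fromCols]
    simp
  rw [h]
  exact posSemidef_conjTranspose_mul_self _

end Blocks

section Spectral

variable [Fintype m] [DecidableEq n]

theorem IsHermitian.trace_mul_self_eq_sum_sq {A : Matrix n n ℝ} (hA : A.IsHermitian) :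
    (A * A).trace = ∑ i, hA.eigenvalues i ^ 2 := by
  conv_lhs => rw [hA.spectral_theorem, ← map_mul, Unitary.conjStarAlgAut_apply, trace_mul_cycle,
    Unitary.coe_star_mul_self, one_mul, diagonal_mul_diagonal, trace_diagonal]
  simp [sq]

theorem IsHermitian.trace_mul_self_le_rank {A : Matrix n n ℝ} (hA : A.IsHermitian)
    (h : ∀ i, |hA.eigenvalues i| ≤ 1) : (A * A).trace ≤ A.rank := by
  have hsq : ∀ i, hA.eigenvalues i ^ 2 ≤ if hA.eigenvalues i ≠ 0 then 1 else 0 := fun i => by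
    split_ifs with hi
    · exact (sq_le_one_iff_abs_le_one _).mpr (h i)
    · simp [not_not.mp hi]
  rw [hA.trace_mul_self_eq_sum_sq, hA.rank_eq_card_non_zero_eigs, Fintype.card_subtype]
  exact_mod_cast (Finset.sum_le_sum fun i _ => hsq i).trans_eq (Finset.sum_boole _ _)

theorem trace_transpose_mul_self_sq_le_card {Q : Matrix m n ℝ}
    (hQQ : (Qᵀ * Q).IsHermitian) (hQ : ∀ i, hQQ.eigenvalues i ≤ 1) :
    (Qᵀ * Q * (Qᵀ * Q)).trace ≤ Fintype.card m := by
  have hpsd : (Qᵀ * Q).PosSemidef := by simpa using posSemidef_conjTranspose_mul_self Q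
  refine (hQQ.trace_mul_self_le_rank fun i => abs_le.mpr ⟨?_, hQ i⟩).trans ?_
  · linarith [hpsd.eigenvalues_nonneg i]
  · exact_mod_cast (rank_mul_le_right Qᵀ Q).trans (rank_le_card_height Q)

end Spectral

section OrthogonalConj

theorem conj_reindex_sub (R : Matrix n n ℝ) (e : m ≃ n) (M N : Matrix m m ℝ) :
    R * reindex e e M * Rᵀ - R * reindex e e N * Rᵀ = R * reindex e e (M - N) * Rᵀ := by
  rw [← Matrix.sub_mul, ← Matrix.mul_sub]
  rfl

theorem PosSemidef.conj_reindex (R : Matrix n n ℝ) (e : m ≃ n) {M : Matrix m m ℝ}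
    (hM : M.PosSemidef) : (R * reindex e e M * Rᵀ).PosSemidef := by
  simpa using (hM.submatrix e.symm).mul_mul_conjTranspose_same R

variable [DecidableEq n] {R : Matrix n n ℝ}

theorem trace_conj_reindex_mul [Fintype m] (hR : R * Rᵀ = 1) (e : m ≃ n) (M N : Matrix m m ℝ) :
    ((R * reindex e e M * Rᵀ) * (R * reindex e e N * Rᵀ)).trace = (M * N).trace := by
  have hRR : Rᵀ * R = 1 := mul_eq_one_comm.mp hR
  calc ((R * reindex e e M * Rᵀ) * (R * reindex e e N * Rᵀ)).trace
      = (R * (reindex e e M * (Rᵀ * R) * reindex e e N) * Rᵀ).trace := by noncomm_ring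
    _ = (reindex e e (M * N)).trace := by
      rw [hRR, Matrix.mul_one, trace_mul_cycle, hRR, Matrix.one_mul, reindex_apply,
        reindex_apply, submatrix_mul_equiv, reindex_apply]
    _ = (M * N).trace := Fintype.sum_equiv e.symm _ _ fun _ => rfl

theorem exists_posSemidef_conj_reindex_eq (hR : R * Rᵀ = 1) (e : m ≃ n) {Z : Matrix n n ℝ}
    (hZ : Z.PosSemidef) : ∃ B : Matrix m m ℝ, B.PosSemidef ∧ Z = R * reindex e e B * Rᵀ := by
  refine ⟨reindex e.symm e.symm (Rᵀ * Z * R), ?_, ?_⟩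
  · simpa using (hZ.mul_mul_conjTranspose_same Rᵀ).submatrix e
  · calc Z = (R * Rᵀ) * Z * (R * Rᵀ) := by rw [hR, Matrix.one_mul, Matrix.mul_one]
      _ = _ := by simp [Matrix.mul_assoc]

end OrthogonalConj

end Matrix

section Distance

variable {d : ℕ}

theorem nrm_nonneg (p : E d) : 0 ≤ nrm p := Real.sqrt_nonneg _

theorem sdist_nonneg (p : E d) (S : Set (E d)) : 0 ≤ sdist p S :=
  Real.sInf_nonneg <| by rintro _ ⟨q, -, rfl⟩; exact nrm_nonneg _

theorem sdist_le_nrm_sub {p q : E d} {S : Set (E d)} (hq : q ∈ S) : sdist p S ≤ nrm (p - q) :=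
  csInf_le ⟨0, by rintro _ ⟨q, -, rfl⟩; exact nrm_nonneg _⟩ ⟨q, hq, rfl⟩

theorem sdist_eq_nrm_sub {p q : E d} {S : Set (E d)} (hq : q ∈ S)
    (h : ∀ q' ∈ S, nrm (p - q) ≤ nrm (p - q')) : sdist p S = nrm (p - q) :=
  IsLeast.csInf_eq ⟨⟨q, hq, rfl⟩, by rintro _ ⟨q', hq', rfl⟩; exact h q' hq'⟩

theorem nrm_sub_conj_reindex {m : Type*} [Fintype m] {R : Matrix (Fin d) (Fin d) ℝ}
    (hR : R * Rᵀ = 1) (e : m ≃ Fin d) (x y x' y' : ℝ) (M N : Matrix m m ℝ) :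
    nrm (((x, y, R * reindex e e M * Rᵀ) : E d) - (x', y', R * reindex e e N * Rᵀ))
      = √((x - x') ^ 2 + (y - y') ^ 2 + ((M - N) * (M - N)).trace) := by
  rw [Prod.mk_sub_mk, Prod.mk_sub_mk, conj_reindex_sub, nrm, trace_conj_reindex_mul hR]

end Distance

section LogdetExample

/-- The face `F_s` of `K_logdet` cut out by the normal `(0, n_y, N)` with `n_y > 0`. -/
def logdetFace {d : ℕ} (N : Matrix (Fin d) (Fin d) ℝ) : Set (E d) :=
  {p | p.1 ≤ 0 ∧ p.2.1 = 0 ∧ p.2.2.PosSemidef ∧ (p.2.2 * N).trace = 0}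

variable {m n : Type*} [Fintype m] [Fintype n] [DecidableEq m] {d : ℕ}
  {R : Matrix (Fin d) (Fin d) ℝ} (e : m ⊕ n ≃ Fin d)

theorem ip_conj_fromBlocks_eq_zero (hR : R * Rᵀ = 1) (Q : Matrix n m ℝ) (t : ℝ)
    (S : Matrix n n ℝ) (x y : ℝ) :
    ip ((x, 0, R * reindex e e (fromBlocks 1 (t • Qᵀ) (t • Q) 0) * Rᵀ) : E d)
      (0, y, R * reindex e e (fromBlocks 0 0 0 S) * Rᵀ) = 0 := by
  rw [ip, trace_conj_reindex_mul hR, fromBlocks_multiply, trace_fromBlocks]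
  simp

theorem sdist_logdetFace_eq (hR : R * Rᵀ = 1) {S : Matrix n n ℝ} (hS : S.PosDef)
    (Q : Matrix n m ℝ) {t : ℝ} (ht : 0 ≤ t) :
    sdist ((-1, 0, R * reindex e e (fromBlocks 1 (t • Qᵀ) (t • Q) 0) * Rᵀ) : E d)
      (logdetFace (R * reindex e e (fromBlocks 0 0 0 S) * Rᵀ))
      = √2 * √((Qᵀ * Q).trace) * t := by
  have hproj : ((-1, 0, R * reindex e e (fromBlocks 1 0 0 0) * Rᵀ) : E d) ∈
      logdetFace (R * reindex e e (fromBlocks 0 0 0 S) * Rᵀ) := by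
    refine ⟨by norm_num, rfl, ?_, ?_⟩
    · simpa using (posSemidef_fromBlocks_one_transpose (0 : Matrix n m ℝ)).conj_reindex R e
    · rw [trace_conj_reindex_mul hR, fromBlocks_multiply, trace_fromBlocks]
      simp
  rw [sdist_eq_nrm_sub hproj]
  · rw [nrm_sub_conj_reindex hR, trace_mul_self_fromBlocks_sub,
      ← Real.sqrt_sq (by positivity : 0 ≤ √2 * √((Qᵀ * Q).trace) * t), mul_pow, mul_pow,
      Real.sq_sqrt zero_le_two, Real.sq_sqrt (trace_transpose_mul_self_nonneg Q)]
    simp only [sub_self, Matrix.zero_mul, trace_zero]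
    ring_nf
  rintro ⟨x, y, Z⟩ ⟨-, -, hZ, hZS⟩
  obtain ⟨B, hB, rfl⟩ := exists_posSemidef_conj_reindex_eq hR e hZ
  rw [trace_conj_reindex_mul hR] at hZS
  rw [hB.eq_fromBlocks_of_trace_mul_eq_zero hS hZS, nrm_sub_conj_reindex hR,
    nrm_sub_conj_reindex hR]
  refine Real.sqrt_le_sqrt ?_
  rw [trace_mul_self_fromBlocks_sub, trace_mul_self_fromBlocks_sub]
  have hX : (1 - B.toBlocks₁₁).IsSymm := isSymm_one.sub (hB.submatrix Sum.inl).isHermitian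
  have := trace_mul_self_nonneg_of_isSymm hX
  simp only [sub_self, Matrix.zero_mul, trace_zero]
  nlinarith [sq_nonneg (-1 - x), sq_nonneg (0 - y)]

theorem sdist_Klogdet_le (hR : R * Rᵀ = 1) (Q : Matrix n m ℝ) (hQQ : (Qᵀ * Q).IsHermitian)
    (hQ : ∀ i, hQQ.eigenvalues i ≤ 1) (t : ℝ) :
    sdist ((-1, 0, R * reindex e e (fromBlocks 1 (t • Qᵀ) (t • Q) 0) * Rᵀ) : E d) (Klogdet d)
      ≤ t ^ 2 * √(Fintype.card n) := by
  set P := t • Q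
  have hmem : ((-1, 0, R * reindex e e (fromBlocks 1 Pᵀ P (P * Pᵀ)) * Rᵀ) : E d) ∈ Klogdet d :=
    Or.inr ⟨by norm_num, rfl, (posSemidef_fromBlocks_one_transpose P).conj_reindex R e⟩
  have hdiff : fromBlocks 1 (t • Qᵀ) P 0 - fromBlocks 1 Pᵀ P (P * Pᵀ)
      = fromBlocks 0 0 0 (-(P * Pᵀ)) := by
    simp [P, sub_eq_add_neg, fromBlocks_neg, fromBlocks_add, transpose_smul]
  have htr : (P * Pᵀ * (P * Pᵀ)).trace = t ^ 4 * (Qᵀ * Q * (Qᵀ * Q)).trace := by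
    simp only [P, transpose_smul, Matrix.smul_mul, Matrix.mul_smul, smul_smul, trace_smul,
      smul_eq_mul]
    rw [Matrix.mul_assoc, trace_mul_comm, Matrix.mul_assoc, Matrix.mul_assoc,
      ← Matrix.mul_assoc Qᵀ Q]
    ring
  refine (sdist_le_nrm_sub hmem).trans ?_
  rw [nrm_sub_conj_reindex hR, hdiff, fromBlocks_multiply, trace_fromBlocks]
  simp only [sub_self, Matrix.mul_zero, add_zero, zero_add, trace_zero, neg_mul_neg]
  rw [htr, ← Real.sqrt_sq (by positivity : 0 ≤ t ^ 2), ← Real.sqrt_mul (by positivity)]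
  refine Real.sqrt_le_sqrt ?_
  nlinarith [trace_transpose_mul_self_sq_le_card hQQ hQ, pow_nonneg (sq_nonneg t) 2]

end LogdetExample

theorem mul_rpow_half_le_of_le_sqrt_div_sq {a r k D : ℝ} (ha : 0 ≤ a) (hr : 0 < r) (hk : 0 < k)
    (hD0 : 0 ≤ D) (hD : D ≤ √r / k ^ 2) : a / r ^ (1 / 4 : ℝ) * D ^ (1 / 2 : ℝ) ≤ a / k := by
  have hroot : (√r / k ^ 2) ^ (1 / 2 : ℝ) = r ^ (1 / 4 : ℝ) / k := by
    rw [Real.div_rpow (Real.sqrt_nonneg _) (by positivity), Real.sqrt_eq_rpow,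
      ← Real.rpow_mul hr.le, ← Real.rpow_natCast, ← Real.rpow_mul hk.le]
    norm_num
  calc a / r ^ (1 / 4 : ℝ) * D ^ (1 / 2 : ℝ) ≤ a / r ^ (1 / 4 : ℝ) * (r ^ (1 / 4 : ℝ) / k) := by
        rw [← hroot]; gcongr
    _ = a / k := by field_simp [(Real.rpow_pos_of_pos hr _).ne']

theorem stmt_13_general (s r : ℕ) (hr : 0 < r)
    (R : Matrix (Fin (s + r)) (Fin (s + r)) ℝ) (hR : R * Rᵀ = 1)
    (Sig : Matrix (Fin r) (Fin r) ℝ) (hSigpos : Sig.PosDef)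
    (ny : ℝ)
    (Q : Matrix (Fin r) (Fin s) ℝ) (hQQ : (Qᵀ * Q).IsHermitian)
    (hQmaxle : ∀ i, hQQ.eigenvalues i ≤ 1) :
    ∀ k : ℕ, 1 ≤ k →
      ip ((-1, 0, R * (Matrix.reindex finSumFinEquiv finSumFinEquiv
            (Matrix.fromBlocks (1 : Matrix (Fin s) (Fin s) ℝ)
              ((k : ℝ)⁻¹ • Qᵀ) ((k : ℝ)⁻¹ • Q) (0 : Matrix (Fin r) (Fin r) ℝ))) * Rᵀ) : E (s + r))
        ((0, ny, R * (Matrix.reindex finSumFinEquiv finSumFinEquiv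
            (Matrix.fromBlocks (0 : Matrix (Fin s) (Fin s) ℝ) 0 0 Sig)) * Rᵀ) : E (s + r)) = 0 ∧
      sdist ((-1, 0, R * (Matrix.reindex finSumFinEquiv finSumFinEquiv
            (Matrix.fromBlocks (1 : Matrix (Fin s) (Fin s) ℝ)
              ((k : ℝ)⁻¹ • Qᵀ) ((k : ℝ)⁻¹ • Q) (0 : Matrix (Fin r) (Fin r) ℝ))) * Rᵀ) : E (s + r))
          {p : E (s + r) | p.1 ≤ 0 ∧ p.2.1 = 0 ∧ p.2.2.PosSemidef ∧
            (p.2.2 * (R * (Matrix.reindex finSumFinEquiv finSumFinEquiv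
              (Matrix.fromBlocks (0 : Matrix (Fin s) (Fin s) ℝ) 0 0 Sig)) * Rᵀ)).trace = 0}
        = Real.sqrt 2 * Real.sqrt ((Qᵀ * Q).trace) / k ∧
      sdist ((-1, 0, R * (Matrix.reindex finSumFinEquiv finSumFinEquiv
            (Matrix.fromBlocks (1 : Matrix (Fin s) (Fin s) ℝ)
              ((k : ℝ)⁻¹ • Qᵀ) ((k : ℝ)⁻¹ • Q) (0 : Matrix (Fin r) (Fin r) ℝ))) * Rᵀ) : E (s + r))
          (Klogdet (s + r)) ≤ Real.sqrt r / (k : ℝ) ^ 2 ∧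
      Real.sqrt 2 * Real.sqrt ((Qᵀ * Q).trace) / (r : ℝ) ^ ((1 : ℝ) / 4) *
          sdist ((-1, 0, R * (Matrix.reindex finSumFinEquiv finSumFinEquiv
            (Matrix.fromBlocks (1 : Matrix (Fin s) (Fin s) ℝ)
              ((k : ℝ)⁻¹ • Qᵀ) ((k : ℝ)⁻¹ • Q) (0 : Matrix (Fin r) (Fin r) ℝ))) * Rᵀ) : E (s + r))
            (Klogdet (s + r)) ^ ((1 : ℝ) / 2)
        ≤ sdist ((-1, 0, R * (Matrix.reindex finSumFinEquiv finSumFinEquiv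
            (Matrix.fromBlocks (1 : Matrix (Fin s) (Fin s) ℝ)
              ((k : ℝ)⁻¹ • Qᵀ) ((k : ℝ)⁻¹ • Q) (0 : Matrix (Fin r) (Fin r) ℝ))) * Rᵀ) : E (s + r))
          {p : E (s + r) | p.1 ≤ 0 ∧ p.2.1 = 0 ∧ p.2.2.PosSemidef ∧
            (p.2.2 * (R * (Matrix.reindex finSumFinEquiv finSumFinEquiv
              (Matrix.fromBlocks (0 : Matrix (Fin s) (Fin s) ℝ) 0 0 Sig)) * Rᵀ)).trace = 0} := by
  intro k hk
  have hk0 : (0 : ℝ) < k := by exact_mod_cast hk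
  have hdistF := sdist_logdetFace_eq finSumFinEquiv hR hSigpos Q (inv_nonneg.mpr hk0.le)
  have hdistK := sdist_Klogdet_le finSumFinEquiv hR Q hQQ hQmaxle (k : ℝ)⁻¹
  rw [← div_eq_mul_inv] at hdistF
  rw [Fintype.card_fin, inv_pow, inv_mul_eq_div] at hdistK
  refine ⟨ip_conj_fromBlocks_eq_zero finSumFinEquiv hR Q _ Sig (-1) ny, hdistF, hdistK, ?_⟩
  exact (mul_rpow_half_le_of_le_sqrt_div_sq (by positivity) (by exact_mod_cast hr) hk0
    (sdist_nonneg _ _) hdistK).trans_eq hdistF.symm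

/-- Remark 3.2 (tightness of the Hölderian error bound for `F_s`, `n_y > 0`): with `d = s + r`,
`0 < r < d`, `n_Z = R [[0,0],[0,Sig_r]] Rᵀ` for an orthogonal `R` and a diagonal `Sig_r ≻ 0`,
`n = (0, n_y, n_Z)` with `n_y > 0`, a matrix `Q` with `0 < λ_max(QᵀQ) ≤ 1`, and
`w^k = (-1, 0, R [[I, Qᵀ/k],[Q/k, 0]] Rᵀ)`, one has `⟨w^k, n⟩ = 0`,
`dist(w^k, F_s) = √2 ‖Q‖_F / k`, `dist(w^k, K_logdet) ≤ √r / k²`, and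
`dist(w^k, F_s) ≥ (√2 ‖Q‖_F / r^(1/4)) dist(w^k, K_logdet)^(1/2)`. -/
theorem stmt_13 (s r : ℕ) (hs : 0 < s) (hr : 0 < r)
    (R : Matrix (Fin (s + r)) (Fin (s + r)) ℝ) (hR : R * Rᵀ = 1)
    (Sig : Matrix (Fin r) (Fin r) ℝ) (hSigdiag : Sig.IsDiag) (hSigpos : Sig.PosDef)
    (ny : ℝ) (hny : 0 < ny)
    (Q : Matrix (Fin r) (Fin s) ℝ) (hQQ : (Qᵀ * Q).IsHermitian)
    (hQmaxpos : ∃ i, 0 < hQQ.eigenvalues i) (hQmaxle : ∀ i, hQQ.eigenvalues i ≤ 1) :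
    ∀ k : ℕ, 1 ≤ k →
      ip ((-1, 0, R * (Matrix.reindex finSumFinEquiv finSumFinEquiv
            (Matrix.fromBlocks (1 : Matrix (Fin s) (Fin s) ℝ)
              ((k : ℝ)⁻¹ • Qᵀ) ((k : ℝ)⁻¹ • Q) (0 : Matrix (Fin r) (Fin r) ℝ))) * Rᵀ) : E (s + r))
        ((0, ny, R * (Matrix.reindex finSumFinEquiv finSumFinEquiv
            (Matrix.fromBlocks (0 : Matrix (Fin s) (Fin s) ℝ) 0 0 Sig)) * Rᵀ) : E (s + r)) = 0 ∧
      sdist ((-1, 0, R * (Matrix.reindex finSumFinEquiv finSumFinEquiv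
            (Matrix.fromBlocks (1 : Matrix (Fin s) (Fin s) ℝ)
              ((k : ℝ)⁻¹ • Qᵀ) ((k : ℝ)⁻¹ • Q) (0 : Matrix (Fin r) (Fin r) ℝ))) * Rᵀ) : E (s + r))
          {p : E (s + r) | p.1 ≤ 0 ∧ p.2.1 = 0 ∧ p.2.2.PosSemidef ∧
            (p.2.2 * (R * (Matrix.reindex finSumFinEquiv finSumFinEquiv
              (Matrix.fromBlocks (0 : Matrix (Fin s) (Fin s) ℝ) 0 0 Sig)) * Rᵀ)).trace = 0}
        = Real.sqrt 2 * Real.sqrt ((Qᵀ * Q).trace) / k ∧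
      sdist ((-1, 0, R * (Matrix.reindex finSumFinEquiv finSumFinEquiv
            (Matrix.fromBlocks (1 : Matrix (Fin s) (Fin s) ℝ)
              ((k : ℝ)⁻¹ • Qᵀ) ((k : ℝ)⁻¹ • Q) (0 : Matrix (Fin r) (Fin r) ℝ))) * Rᵀ) : E (s + r))
          (Klogdet (s + r)) ≤ Real.sqrt r / (k : ℝ) ^ 2 ∧
      Real.sqrt 2 * Real.sqrt ((Qᵀ * Q).trace) / (r : ℝ) ^ ((1 : ℝ) / 4) *
          sdist ((-1, 0, R * (Matrix.reindex finSumFinEquiv finSumFinEquiv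
            (Matrix.fromBlocks (1 : Matrix (Fin s) (Fin s) ℝ)
              ((k : ℝ)⁻¹ • Qᵀ) ((k : ℝ)⁻¹ • Q) (0 : Matrix (Fin r) (Fin r) ℝ))) * Rᵀ) : E (s + r))
            (Klogdet (s + r)) ^ ((1 : ℝ) / 2)
        ≤ sdist ((-1, 0, R * (Matrix.reindex finSumFinEquiv finSumFinEquiv
            (Matrix.fromBlocks (1 : Matrix (Fin s) (Fin s) ℝ)
              ((k : ℝ)⁻¹ • Qᵀ) ((k : ℝ)⁻¹ • Q) (0 : Matrix (Fin r) (Fin r) ℝ))) * Rᵀ) : E (s + r))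
          {p : E (s + r) | p.1 ≤ 0 ∧ p.2.1 = 0 ∧ p.2.2.PosSemidef ∧
            (p.2.2 * (R * (Matrix.reindex finSumFinEquiv finSumFinEquiv
              (Matrix.fromBlocks (0 : Matrix (Fin s) (Fin s) ℝ) 0 0 Sig)) * Rᵀ)).trace = 0} :=
  stmt_13_general s r hr R hR Sig hSigpos ny Q hQQ hQmaxle
end
end
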